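/- arXiv:1101.3004 — 3 statements merged into one kernel-verified Lean document; each statement's English description precedes it below -/
import Mathlib

section
/- For every integer n ≥ 1, the number of c-strings of length 2n+1 is at least 2^n; that is, Π_{2n+1} ≥ 2^n. -/
/-- A c-string of length `k` is a sequence of nonnegative integers `(c₁, …, c_k)`
with `c₁ = 1`, `c_{i+1} ≤ 2·c_i` for all `1 ≤ i ≤ k−1`, and `c₁ + ⋯ + c_k = k`. -/
def IsCString (k : ℕ) (l : List ℕ) : Prop :=
  l.length = k ∧ l.head? = some 1 ∧ l.Chain' (fun a b => b ≤ 2 * a) ∧ l.sum = k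

/-- `Π_k`, the number of c-strings of length `k`. -/
noncomputable def numCStrings (k : ℕ) : ℕ :=
  Nat.card {l : List ℕ // IsCString k l}

/-! A c-string `c` of length `k` gives two c-strings of length `k + 2`, namely `1 :: 1 :: c` and
`1 :: 2 :: (c.tail ++ [0])`: the second entry tells them apart, and `c` is recovered from either.
Hence `Π_{k+2} ≥ 2 Π_k`, and `Π_1 ≥ 1` because of `[1]`. -/

lemma List.finite_setOf_length_eq_forall_le (n m : ℕ) :
    {l : List ℕ | l.length = n ∧ ∀ x ∈ l, x ≤ m}.Finite := by
  refine ((List.finite_length_eq (Fin (m + 1)) n).image (List.map Fin.val)).subset ?_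
  rintro l ⟨hlen, hle⟩
  refine ⟨l.pmap (fun x hx => ⟨x, Nat.lt_succ_of_le hx⟩) hle, by simpa using hlen, ?_⟩
  simp [List.map_pmap]

namespace IsCString

variable {k : ℕ} {l t : List ℕ}

lemma eq_one_cons_tail (h : IsCString k l) : l = 1 :: l.tail := by
  obtain ⟨t, rfl⟩ := List.head?_eq_some_iff.1 h.2.1
  rfl

lemma le_of_mem (h : IsCString k l) {x : ℕ} (hx : x ∈ l) : x ≤ k :=
  h.2.2.2 ▸ List.le_sum_of_mem hx

lemma one_one_cons (h : IsCString k l) : IsCString (k + 2) (1 :: 1 :: l) := by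
  obtain ⟨hlen, hhead, hchain, hsum⟩ := h
  refine ⟨by simp [hlen], rfl, ?_, by simp [hsum]; omega⟩
  exact (List.IsChain.cons hchain (by simp [hhead])).cons (by simp)

lemma one_two_cons_append_zero (h : IsCString k (1 :: t)) :
    IsCString (k + 2) (1 :: 2 :: (t ++ [0])) := by
  obtain ⟨hlen, -, hchain, hsum⟩ := h
  obtain ⟨hhead, htail⟩ := List.isChain_cons.1 hchain
  have hzero : List.IsChain (fun a b => b ≤ 2 * a) (t ++ [0]) :=
    htail.append (List.isChain_singleton 0) (by simp)
  refine ⟨by simp at hlen ⊢; omega, rfl, ?_, by simp at hsum ⊢; omega⟩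
  refine (hzero.cons fun y hy => ?_).cons (by simp)
  cases t with
  | nil => simp at hy; omega
  | cons a t => simp at hy hhead; omega

end IsCString

lemma finite_isCString (k : ℕ) : {l | IsCString k l}.Finite :=
  (List.finite_setOf_length_eq_forall_le k k).subset fun _ h => ⟨h.1, fun _ => h.le_of_mem⟩

instance (k : ℕ) : Finite {l : List ℕ // IsCString k l} := (finite_isCString k).to_subtype

lemma two_mul_numCStrings_le (k : ℕ) : 2 * numCStrings k ≤ numCStrings (k + 2) := by
  let f : {l // IsCString k l} ⊕ {l // IsCString k l} → {l // IsCString (k + 2) l}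
    | .inl l => ⟨1 :: 1 :: l, l.2.one_one_cons⟩
    | .inr l => ⟨1 :: 2 :: (l.1.tail ++ [0]), (l.2.eq_one_cons_tail ▸ l.2).one_two_cons_append_zero⟩
  have hf : f.Injective := by
    rintro (⟨l, hl⟩ | ⟨l, hl⟩) (⟨l', hl'⟩ | ⟨l', hl'⟩) h <;> simp [f] at h
    · subst h; rfl
    · simp only [Sum.inr.injEq, Subtype.mk.injEq]
      rw [hl.eq_one_cons_tail, hl'.eq_one_cons_tail, h]
  simpa [numCStrings, Nat.card_sum, two_mul] using Nat.card_le_card_of_injective f hf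

theorem two_pow_le_numCStrings_general (n : ℕ) :
    2 ^ n ≤ numCStrings (2 * n + 1) := by
  induction n with
  | zero =>
    have : Nonempty {l // IsCString 1 l} := ⟨⟨[1], rfl, rfl, List.isChain_singleton 1, rfl⟩⟩
    exact Nat.card_pos
  | succ n ih =>
    calc 2 ^ (n + 1) ≤ 2 * numCStrings (2 * n + 1) := by rw [pow_succ']; omega
      _ ≤ numCStrings (2 * (n + 1) + 1) := two_mul_numCStrings_le _

/-- For every integer `n ≥ 1`, the number of c-strings of length `2n+1` is at
least `2^n`; that is, `Π_{2n+1} ≥ 2^n`. -/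
theorem two_pow_le_numCStrings (n : ℕ) (hn : 1 ≤ n) :
    2 ^ n ≤ numCStrings (2 * n + 1) :=
  two_pow_le_numCStrings_general n
end

section
/- For every integer m ≥ 1, the number of partitions of 1 into 2m powers of 1/2 is at least 2^{m−1}. -/
/-!
In a partition of `1` into `n` powers of `1/2`, a largest exponent `E > 0` occurs at least twice
(otherwise `2^E` times the sum would be odd); merging two copies into one `E - 1` leaves a
partition into `n - 1` parts, so every exponent is less than `n` and there are finitely many
partitions. For the lower bound, `2 * (1/2)^p` is split into `2k + 2` parts along a word of
`k` bits, a bit choosing `(1/2)^p + (1/2)^(p+1) + 2 * (1/2)^(p+2)` or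
`2 * (1/2)^(p+1) + 2 * (1/2)^(p+1)` and recursing on the last summand; the number of parts
`(1/2)^p` reveals the first bit, so different words give different partitions.
-/

/-- A partition of `1` into `m` powers of `1/2` is a multiset of `m` nonnegative
integers `(e₁, …, e_m)` such that `(1/2)^{e₁} + ⋯ + (1/2)^{e_m} = 1` in `ℚ`. -/
def IsPartitionOfOne (m : ℕ) (s : Multiset ℕ) : Prop :=
  Multiset.card s = m ∧ (s.map fun e => ((1 : ℚ) / 2) ^ e).sum = 1

/-- The number of partitions of `1` into `m` powers of `1/2`. -/
noncomputable def numPartitionsOfOne (m : ℕ) : ℕ :=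
  Nat.card {s : Multiset ℕ // IsPartitionOfOne m s}

open Multiset

def dyadicWeight (s : Multiset ℕ) : ℚ :=
  (s.map fun e => ((1 : ℚ) / 2) ^ e).sum

@[simp]
lemma dyadicWeight_zero : dyadicWeight 0 = 0 := by
  simp [dyadicWeight]

@[simp]
lemma dyadicWeight_cons (e : ℕ) (s : Multiset ℕ) :
    dyadicWeight (e ::ₘ s) = (1 / 2) ^ e + dyadicWeight s := by
  simp [dyadicWeight]

lemma isPartitionOfOne_iff {m : ℕ} {s : Multiset ℕ} :
    IsPartitionOfOne m s ↔ card s = m ∧ dyadicWeight s = 1 :=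
  Iff.rfl

lemma exists_nat_dyadicWeight_mul_two_pow {s : Multiset ℕ} {E : ℕ} (hs : ∀ e ∈ s, e ≤ E) :
    ∃ k : ℕ, dyadicWeight s * 2 ^ E = k := by
  induction s using Multiset.induction_on with
  | empty => exact ⟨0, by simp⟩
  | cons a s ih =>
    obtain ⟨k, hk⟩ := ih fun e he => hs e (mem_cons_of_mem he)
    have ha : ((1 : ℚ) / 2) ^ a * 2 ^ E = 2 ^ (E - a) := by
      rw [← Nat.sub_add_cancel (hs a (mem_cons_self a s)), pow_add, Nat.add_sub_cancel,
        mul_left_comm, ← mul_pow]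
      norm_num
    exact ⟨2 ^ (E - a) + k, by push_cast; rw [dyadicWeight_cons, add_mul, ha, hk]⟩

lemma mem_erase_of_dyadicWeight_eq_one {s : Multiset ℕ} (hs : dyadicWeight s = 1) {E : ℕ}
    (hE : E ∈ s) (hmax : ∀ e ∈ s, e ≤ E) (hpos : 0 < E) : E ∈ s.erase E := by
  by_contra hnot
  have hrest : ∀ e ∈ s.erase E, e ≤ E - 1 := fun e he => by
    have := hmax e (mem_of_mem_erase he)
    have : e ≠ E := by rintro rfl; exact hnot he
    omega
  obtain ⟨k, hk⟩ := exists_nat_dyadicWeight_mul_two_pow hrest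
  obtain ⟨F, rfl⟩ : ∃ F, E = F + 1 := ⟨E - 1, by omega⟩
  have hsplit : (1 / 2) ^ (F + 1) + dyadicWeight (s.erase (F + 1)) = 1 := by
    rw [← dyadicWeight_cons, cons_erase hE, hs]
  rw [Nat.add_sub_cancel] at hk
  have hcancel : ((1 : ℚ) / 2) ^ F * 2 ^ F = 1 := by
    rw [← mul_pow]
    norm_num
  have hodd : (2 * 2 ^ F : ℚ) = 2 * k + 1 := by
    linear_combination 2 * hk - 2 * 2 ^ F * hsplit + hcancel
  have : (2 * 2 ^ F : ℕ) = 2 * k + 1 := by exact_mod_cast hodd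
  omega

theorem lt_card_of_dyadicWeight_eq_one {s : Multiset ℕ} (hs : dyadicWeight s = 1) {e : ℕ}
    (he : e ∈ s) : e < card s := by
  induction hn : card s using Nat.strong_induction_on generalizing s e with
  | _ n ih =>
  obtain ⟨E, hE, hmax⟩ := exists_max_image id (s := s) fun h => by simp [h] at he
  suffices E < n from (hmax e he).trans_lt this
  have hn₀ : 0 < n := hn ▸ card_pos_iff_exists_mem.mpr ⟨E, hE⟩
  rcases E with _ | F
  · exact hn₀
  have hE₂ := mem_erase_of_dyadicWeight_eq_one hs hE hmax F.succ_pos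
  set t := (s.erase (F + 1)).erase (F + 1)
  have hst : s = (F + 1) ::ₘ (F + 1) ::ₘ t := by rw [cons_erase hE₂, cons_erase hE]
  have hmerge : dyadicWeight (F ::ₘ t) = 1 := by
    rw [← hs, hst, dyadicWeight_cons, dyadicWeight_cons, dyadicWeight_cons, pow_succ]
    ring
  have hcard : card (F ::ₘ t) = n - 1 := by
    rw [← hn, hst]
    simp
  have := ih _ (by omega) hmerge (mem_cons_self _ _) hcard
  omega

theorem finite_setOf_isPartitionOfOne (n : ℕ) : {s | IsPartitionOfOne n s}.Finite := by
  refine (((Finset.range n).sym n : Set (Sym ℕ n)).toFinite.image Sym.toMultiset).subset ?_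
  rintro s ⟨hcard, hs⟩
  refine ⟨⟨s, hcard⟩, Finset.mem_sym_iff.mpr fun e he => ?_, rfl⟩
  exact Finset.mem_range.mpr (hcard ▸ lt_card_of_dyadicWeight_eq_one hs he)

def splitPartition : List Bool → ℕ → Multiset ℕ
  | [], p => {p, p}
  | false :: bs, p => p ::ₘ (p + 1) ::ₘ splitPartition bs (p + 2)
  | true :: bs, p => (p + 1) ::ₘ (p + 1) ::ₘ splitPartition bs (p + 1)

lemma card_splitPartition (bs : List Bool) (p : ℕ) :
    card (splitPartition bs p) = 2 * bs.length + 2 := by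
  induction bs generalizing p with
  | nil => simp [splitPartition]
  | cons b bs ih => cases b <;> simp [splitPartition, ih] <;> ring

lemma dyadicWeight_splitPartition (bs : List Bool) (p : ℕ) :
    dyadicWeight (splitPartition bs p) = 2 * (1 / 2) ^ p := by
  induction bs generalizing p with
  | nil => simp [splitPartition, dyadicWeight]; ring
  | cons b bs ih => cases b <;> simp only [splitPartition, dyadicWeight_cons, ih, pow_succ] <;> ring

lemma le_of_mem_splitPartition {bs : List Bool} {p e : ℕ} (he : e ∈ splitPartition bs p) :
    p ≤ e := by
  induction bs generalizing p with
  | nil => simp [splitPartition] at he; omega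
  | cons b bs ih =>
    cases b <;> simp only [splitPartition, mem_cons] at he <;>
      rcases he with rfl | rfl | he <;> first | omega | have := ih he; omega

@[simp]
lemma count_splitPartition_nil (p : ℕ) : (splitPartition [] p).count p = 2 := by
  simp [splitPartition]

@[simp]
lemma count_splitPartition_false_cons (bs : List Bool) (p : ℕ) :
    (splitPartition (false :: bs) p).count p = 1 := by
  have : p ∉ splitPartition bs (p + 2) := fun h => by have := le_of_mem_splitPartition h; omega
  simp [splitPartition, count_eq_zero.mpr this]

@[simp]
lemma count_splitPartition_true_cons (bs : List Bool) (p : ℕ) :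
    (splitPartition (true :: bs) p).count p = 0 := by
  have : p ∉ splitPartition bs (p + 1) := fun h => by have := le_of_mem_splitPartition h; omega
  simp [splitPartition, this]

lemma splitPartition_injective (p : ℕ) : Function.Injective (splitPartition · p) := by
  intro bs cs h
  induction bs generalizing cs p with
  | nil =>
    cases cs with
    | nil => rfl
    | cons c cs => have := congrArg (count p) h; cases c <;> simp at this
  | cons b bs ih =>
    cases cs with
    | nil => have := congrArg (count p) h; cases b <;> simp at this
    | cons c cs =>
      obtain rfl : b = c := by
        have := congrArg (count p) h
        cases b <;> cases c <;> simp at this ⊢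
      cases b <;> simp only [splitPartition, cons_inj_right] at h <;> rw [ih _ h]

/-- For every integer `m ≥ 1`, the number of partitions of `1` into `2m` powers
of `1/2` is at least `2^{m−1}`. -/
theorem two_pow_le_numPartitionsOfOne (m : ℕ) (hm : 1 ≤ m) :
    2 ^ (m - 1) ≤ numPartitionsOfOne (2 * m) := by
  have : Finite {s // IsPartitionOfOne (2 * m) s} :=
    (finite_setOf_isPartitionOfOne (2 * m)).to_subtype
  have hpart (b : Fin (m - 1) → Bool) :
      IsPartitionOfOne (2 * m) (splitPartition (List.ofFn b) 1) := by
    refine isPartitionOfOne_iff.mpr ⟨?_, ?_⟩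
    · rw [card_splitPartition, List.length_ofFn]
      omega
    · rw [dyadicWeight_splitPartition]
      norm_num
  calc 2 ^ (m - 1) = Nat.card (Fin (m - 1) → Bool) := by simp
    _ ≤ numPartitionsOfOne (2 * m) :=
      Nat.card_le_card_of_injective (fun b => ⟨_, hpart b⟩) fun b c h =>
        List.ofFn_injective (splitPartition_injective 1 (congrArg Subtype.val h))
end

section
/- For every k ≥ 1, the number Π_k of c-strings of length k equals the number of partitions of 1 into k+1 powers of 1/2. -/
/-!
A c-string `(c₁, …, c_k)` is the level profile of a full binary tree with `k` internal nodes: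
`cᵢ` internal nodes sit at depth `i - 1`, and of their `2cᵢ` children at depth `i` exactly
`2cᵢ - cᵢ₊₁` are leaves. Such a tree has `k + 1` leaves, and its leaf depths satisfy Kraft's
equality `∑ 2^{-e} = 1`. Conversely, a multiset of depths with Kraft sum `1` and no depth `0`
rebuilds the profile level by level: the number of leaves at depth `e` determines how many of the
`2cₑ` nodes at that depth are internal.
-/

open Multiset

def kraftSum (s : Multiset ℕ) : ℚ := (s.map fun e => ((1 : ℚ) / 2) ^ e).sum

@[simp] lemma kraftSum_zero : kraftSum 0 = 0 := rfl

@[simp] lemma kraftSum_cons (e : ℕ) (s : Multiset ℕ) :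
    kraftSum (e ::ₘ s) = ((1 : ℚ) / 2) ^ e + kraftSum s := by
  simp [kraftSum]

@[simp] lemma kraftSum_add (s t : Multiset ℕ) : kraftSum (s + t) = kraftSum s + kraftSum t := by
  simp [kraftSum]

@[simp] lemma kraftSum_replicate (n e : ℕ) :
    kraftSum (replicate n e) = n * ((1 : ℚ) / 2) ^ e := by
  simp [kraftSum]

lemma kraftSum_nonneg (s : Multiset ℕ) : 0 ≤ kraftSum s :=
  Multiset.sum_nonneg fun _ hq => by
    obtain ⟨x, _, rfl⟩ := Multiset.mem_map.mp hq
    positivity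

lemma kraftSum_pos {s : Multiset ℕ} (hs : s ≠ 0) : 0 < kraftSum s := by
  obtain ⟨e, he⟩ := exists_mem_of_ne_zero hs
  obtain ⟨t, rfl⟩ := exists_cons_of_mem he
  rw [kraftSum_cons]
  have := kraftSum_nonneg t
  positivity

lemma kraftSum_eq_count_add_filter (e : ℕ) (s : Multiset ℕ) :
    kraftSum s = count e s * ((1 : ℚ) / 2) ^ e + kraftSum (s.filter (· ≠ e)) := by
  conv_lhs => rw [← filter_add_not (· = e) s, filter_eq']
  simp

abbrev DoublingChain (l : List ℕ) : Prop := l.IsChain fun a b => b ≤ 2 * a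

lemma doublingChain_cons_iff {c : ℕ} {t : List ℕ} :
    DoublingChain (c :: t) ↔ t.headI ≤ 2 * c ∧ DoublingChain t := by
  cases t <;> simp

/-- `leafDepths e l` is the multiset of leaf depths of the forest having `l[i]` internal nodes
at depth `e - 1 + i`; `[].headI = 0` supplies the convention `c_{k+1} = 0`. -/
def leafDepths : ℕ → List ℕ → Multiset ℕ
  | _, [] => 0
  | e, c :: t => replicate (2 * c - t.headI) e + leafDepths (e + 1) t

lemma le_of_mem_leafDepths {x : ℕ} : ∀ {e : ℕ} {l : List ℕ}, x ∈ leafDepths e l → e ≤ x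
  | _, [], h => absurd h (Multiset.notMem_zero x)
  | e, c :: t, h => by
    rcases Multiset.mem_add.mp h with h | h
    · exact (eq_of_mem_replicate h).ge
    · exact (Nat.le_succ e).trans (le_of_mem_leafDepths h)

lemma count_leafDepths_cons_self (e c : ℕ) (t : List ℕ) :
    count e (leafDepths e (c :: t)) = 2 * c - t.headI := by
  have : e ∉ leafDepths (e + 1) t := fun h => by have := le_of_mem_leafDepths h; omega
  simp [leafDepths, count_eq_zero.mpr this]

lemma leafDepths_replicate_zero (n e : ℕ) : leafDepths e (List.replicate n 0) = 0 := by
  induction n generalizing e with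
  | zero => rfl
  | succ n ih => simp [List.replicate_succ, leafDepths, ih]

lemma leafDepths_append_replicate_zero (n : ℕ) :
    ∀ (e : ℕ) (l : List ℕ), leafDepths e (l ++ List.replicate n 0) = leafDepths e l
  | e, [] => leafDepths_replicate_zero n e
  | e, c :: t => by
    have hhead : (t ++ List.replicate n 0).headI = t.headI := by
      cases t <;> cases n <;> rfl
    simp only [List.cons_append, leafDepths, hhead, leafDepths_append_replicate_zero n (e + 1) t]

lemma card_leafDepths : ∀ {e : ℕ} {l : List ℕ}, DoublingChain l →
    card (leafDepths e l) = l.sum + l.headI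
  | _, [], _ => rfl
  | e, c :: t, hl => by
    obtain ⟨hc, ht⟩ := doublingChain_cons_iff.mp hl
    simp only [leafDepths, card_add, card_replicate, card_leafDepths ht, List.sum_cons,
      List.headI_cons]
    omega

lemma kraftSum_leafDepths : ∀ {e : ℕ} {l : List ℕ}, DoublingChain l →
    kraftSum (leafDepths e l) = 2 * l.headI * ((1 : ℚ) / 2) ^ e
  | _, [], _ => by simp [leafDepths]
  | e, c :: t, hl => by
    obtain ⟨hc, ht⟩ := doublingChain_cons_iff.mp hl
    rw [leafDepths, kraftSum_add, kraftSum_replicate, kraftSum_leafDepths ht, Nat.cast_sub hc,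
      List.headI_cons]
    push_cast
    ring

lemma eq_of_leafDepths_eq : ∀ {e : ℕ} {l₁ l₂ : List ℕ}, DoublingChain l₁ → DoublingChain l₂ →
    l₁.length = l₂.length → l₁.headI = l₂.headI → leafDepths e l₁ = leafDepths e l₂ → l₁ = l₂
  | _, [], [], _, _, _, _, _ => rfl
  | e, c :: t₁, d :: t₂, h₁, h₂, hlen, hhead, hdepths => by
    obtain rfl : c = d := hhead
    obtain ⟨hc₁, ht₁⟩ := doublingChain_cons_iff.mp h₁
    obtain ⟨hc₂, ht₂⟩ := doublingChain_cons_iff.mp h₂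
    have hcount := congrArg (count e) hdepths
    rw [count_leafDepths_cons_self, count_leafDepths_cons_self] at hcount
    have hhead' : t₁.headI = t₂.headI := by omega
    have htail : leafDepths (e + 1) t₁ = leafDepths (e + 1) t₂ := by
      simpa only [leafDepths, hhead', add_right_inj] using hdepths
    rw [eq_of_leafDepths_eq ht₁ ht₂ (by simpa using hlen) hhead' htail]
  | _, [], _ :: _, _, _, hlen, _, _ | _, _ :: _, [], _, _, hlen, _, _ => by simp at hlen

lemma exists_leafDepths_eq : ∀ (n : ℕ) {e h : ℕ} {s : Multiset ℕ},
    (∀ x ∈ s, e ≤ x ∧ x < e + n) → kraftSum s = 2 * h * ((1 : ℚ) / 2) ^ e →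
    ∃ l : List ℕ, DoublingChain l ∧ (∀ c ∈ l, 0 < c) ∧ l.headI = h ∧ leafDepths e l = s := by
  intro n e h s hbound hsum
  rcases eq_or_ne s 0 with rfl | hs
  · have : (h : ℚ) = 0 := by simpa using hsum.symm
    exact ⟨[], List.isChain_nil, by simp, by exact_mod_cast this.symm, rfl⟩
  cases n with
  | zero =>
    obtain ⟨x, hx⟩ := exists_mem_of_ne_zero hs
    exact absurd (hbound x hx) (by omega)
  | succ n =>
    have hpow : (0 : ℚ) < ((1 : ℚ) / 2) ^ e := by positivity
    have hh : 0 < h := by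
      have := kraftSum_pos hs
      rw [hsum] at this
      have : (0 : ℚ) < h := by linarith [pos_of_mul_pos_left this hpow.le]
      exact_mod_cast this
    set d := count e s
    set s' := s.filter (· ≠ e)
    have hsplit := kraftSum_eq_count_add_filter e s
    have hd : d ≤ 2 * h := by
      have := kraftSum_nonneg s'
      have : (d : ℚ) ≤ 2 * h := le_of_mul_le_mul_right (by linarith) hpow
      exact_mod_cast this
    have hsum' : kraftSum s' = 2 * (2 * h - d : ℕ) * ((1 : ℚ) / 2) ^ (e + 1) := by
      rw [Nat.cast_sub hd, pow_succ]
      push_cast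
      linarith
    have hbound' : ∀ x ∈ s', e + 1 ≤ x ∧ x < e + 1 + n := by
      intro x hx
      obtain ⟨hxs, hxe⟩ := mem_filter.mp hx
      have := hbound x hxs
      omega
    obtain ⟨l, hl, hpos, hhead, hdepths⟩ := exists_leafDepths_eq n hbound' hsum'
    refine ⟨h :: l, doublingChain_cons_iff.mpr ⟨by omega, hl⟩, ?_, rfl, ?_⟩
    · simpa [hh] using hpos
    · rw [leafDepths, hdepths, hhead, Nat.sub_sub_self hd, ← filter_eq', filter_add_not]

lemma IsPartitionOfOne.one_le_of_mem {m : ℕ} {s : Multiset ℕ} (hs : IsPartitionOfOne m s)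
    (hm : 2 ≤ m) {x : ℕ} (hx : x ∈ s) : 1 ≤ x := by
  obtain ⟨hcard, hsum⟩ := hs
  obtain ⟨t, rfl⟩ := exists_cons_of_mem hx
  rw [Nat.one_le_iff_ne_zero]
  rintro rfl
  have ht : t ≠ 0 := by
    rintro rfl
    simp only [card_cons, card_zero] at hcard
    omega
  have := kraftSum_pos ht
  change kraftSum (0 ::ₘ t) = 1 at hsum
  simp only [kraftSum_cons, pow_zero] at hsum
  linarith

lemma IsCString.headI_eq_one {k : ℕ} {l : List ℕ} (hl : IsCString k l) : l.headI = 1 := by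
  obtain ⟨-, hhead, -⟩ := hl
  cases l <;> simp_all

lemma IsCString.isPartitionOfOne_leafDepths {k : ℕ} {l : List ℕ} (hl : IsCString k l) :
    IsPartitionOfOne (k + 1) (leafDepths 1 l) := by
  have hchain : DoublingChain l := hl.2.2.1
  refine ⟨?_, ?_⟩
  · rw [card_leafDepths hchain, hl.2.2.2, hl.headI_eq_one]
  · change kraftSum _ = 1
    rw [kraftSum_leafDepths hchain, hl.headI_eq_one]
    norm_num

lemma IsPartitionOfOne.exists_isCString_leafDepths_eq {k : ℕ} {s : Multiset ℕ}
    (hs : IsPartitionOfOne (k + 1) s) (hk : 1 ≤ k) : ∃ l, IsCString k l ∧ leafDepths 1 l = s := by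
  have hbound : ∀ x ∈ s, 1 ≤ x ∧ x < 1 + s.sup := fun x hx =>
    ⟨hs.one_le_of_mem (by omega) hx, by have := le_sup hx; omega⟩
  have hkraft : kraftSum s = 2 * (1 : ℕ) * ((1 : ℚ) / 2) ^ 1 := by
    rw [show kraftSum s = 1 from hs.2]
    norm_num
  obtain ⟨l, hl, hpos, hhead, rfl⟩ := exists_leafDepths_eq s.sup hbound hkraft
  have hsum : l.sum = k := by
    have := card_leafDepths (e := 1) hl
    rw [hs.1, hhead] at this
    omega
  have hlen : l.length ≤ k := hsum ▸ List.length_le_sum_of_one_le l hpos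
  -- pad with zeros: trailing empty levels change neither the sum nor the leaf depths
  refine ⟨l ++ List.replicate (k - l.length) 0, ⟨?_, ?_, ?_, ?_⟩,
    leafDepths_append_replicate_zero _ _ _⟩
  · simp only [List.length_append, List.length_replicate]
    omega
  · cases l with
    | nil => simp at hhead
    | cons c t => simp_all
  · refine hl.append (List.isChain_replicate_of_rel _ (le_refl _)) fun x _ y hy => ?_
    simp [(List.mem_replicate.mp (List.mem_of_mem_head? hy)).2]
  · simp [hsum]

/-- For every `k ≥ 1`, the number `Π_k` of c-strings of length `k` equals the
number of partitions of `1` into `k+1` powers of `1/2`. -/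
theorem numCStrings_eq_numPartitionsOfOne (k : ℕ) (hk : 1 ≤ k) :
    numCStrings k = numPartitionsOfOne (k + 1) := by
  refine Nat.card_eq_of_bijective
    (fun l => ⟨leafDepths 1 l, l.2.isPartitionOfOne_leafDepths⟩) ⟨?_, ?_⟩
  · rintro ⟨l₁, h₁⟩ ⟨l₂, h₂⟩ h
    exact Subtype.ext <| eq_of_leafDepths_eq h₁.2.2.1 h₂.2.2.1 (h₁.1.trans h₂.1.symm)
      (h₁.headI_eq_one.trans h₂.headI_eq_one.symm) (congrArg Subtype.val h)
  · rintro ⟨s, hs⟩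
    obtain ⟨l, hl, rfl⟩ := hs.exists_isCString_leafDepths_eq hk
    exact ⟨⟨l, hl⟩, rfl⟩
end
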